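/- Let 𝕎 be the space of (a.e.-equivalence classes of) Lebesgue-integrable functions w : ℝ → ℝ vanishing a.e. on (−∞,0); for λ > 0 and H ∈ ℝ let φ_{λ,H} : 𝕎 → 𝕎 be the map (φ_{λ,H} w)(t) := λ^{H−1} w(t/λ). Let γ > 0, H ∈ ℝ, and let ν be a σ-finite Borel measure on 𝕎 which is (γ,H)-scaling, i.e. λ^{1+γ} ν(φ_{λ,H}(A)) = ν(A) for every λ > 0 and Borel A ⊆ 𝕎. Then for every x > 0, ∫_{ℝ×𝕎} ( ∫_0^x w(t−u) dt )² du ν(dw) = x^{2H−γ} · ∫_{ℝ×𝕎} ( ∫_0^1 w(t−u) dt )² du ν(dw), as an equality in [0,∞]. -/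

import Mathlib

open MeasureTheory Filter Set
open scoped ENNReal Topology

noncomputable section

/-- Borel σ-algebra on `L¹(ℝ)`. -/
instance : MeasurableSpace (Lp ℝ 1 (volume : Measure ℝ)) := borel _

/-- `𝕎`: the space of (a.e.-equivalence classes of) Lebesgue-integrable functions
`ℝ → ℝ` vanishing a.e. on `(-∞, 0)`, with the Borel σ-algebra inherited from `L¹(ℝ)`. -/
abbrev WW : Type :=
  {w : Lp ℝ 1 (volume : Measure ℝ) // ∀ᵐ t ∂(volume : Measure ℝ), t < 0 → w t = 0}

/-- The scaling map `φ_{λ,H} w (t) = λ^{H-1} w(t/λ)` on `𝕎`. -/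
noncomputable def phi (lam H : ℝ) (w : WW) : WW := by
  classical
  exact if h : MemLp (fun t => lam ^ (H - 1) * (w.1 : ℝ → ℝ) (t / lam)) 1 (volume : Measure ℝ) ∧
      ∀ᵐ t ∂(volume : Measure ℝ), t < 0 → lam ^ (H - 1) * (w.1 : ℝ → ℝ) (t / lam) = 0
  then ⟨h.1.toLp _, by
    filter_upwards [h.1.coeFn_toLp, h.2] with t h1 h2 ht
    rw [h1]; exact h2 ht⟩
  else ⟨0, by
    filter_upwards [Lp.coeFn_zero ℝ 1 (volume : Measure ℝ)] with t h1 _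
    simp [h1]⟩

/-- `ν` is a `(γ,H)`-scaling measure on `𝕎`:
`λ^{1+γ} ν(φ_{λ,H}(A)) = ν(A)` for every `λ > 0` and Borel `A`. -/
def ScalingMeasure (ν : Measure WW) (γ H : ℝ) : Prop :=
  ∀ lam : ℝ, 0 < lam → ∀ A : Set WW, MeasurableSet A →
    ENNReal.ofReal (lam ^ (1 + γ)) * ν (phi lam H '' A) = ν A

/-- `𝒲(w) = ∫_0^∞ w(t) dt`. -/
noncomputable def Wcal (w : WW) : ℝ := ∫ t in Set.Ioi (0:ℝ), (w.1 : ℝ → ℝ) t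

/-- `Ψ(z) = e^{iz} - 1 - iz`. -/
noncomputable def Psi (z : ℝ) : ℂ := Complex.exp ((z:ℂ) * Complex.I) - 1 - (z:ℂ) * Complex.I

end

/-! Substituting `t = λ s`, `u = λ v` shows that `S_a(w) := ∫ (∫_0^a w(t - u) dt)² du`
satisfies `S_a(φ_{λ,H} w) = λ^{2H+1} S_{a/λ}(w)`, while the scaling property says exactly
that `φ_{λ,H}` pushes `ν` forward to `λ^{1+γ} ν`. Integrating the first identity for
`λ = a = x` against `ν` gives `x^{1+γ} ∫ S_x dν = x^{2H+1} ∫ S_1 dν`. -/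

noncomputable section

instance : BorelSpace (Lp ℝ 1 (volume : Measure ℝ)) := ⟨rfl⟩

section Dilation

variable {lam : ℝ}

lemma quasiMeasurePreserving_div_const (hlam : lam ≠ 0) :
    Measure.QuasiMeasurePreserving (fun t : ℝ => t / lam) volume volume := by
  simpa only [div_eq_inv_mul, ← smul_eq_mul] using
    Measure.quasiMeasurePreserving_smul volume (inv_ne_zero hlam)

lemma lintegral_comp_div (g : ℝ → ℝ≥0∞) (hlam : lam ≠ 0) :
    ∫⁻ t, g (t / lam) = ENNReal.ofReal |lam| * ∫⁻ t, g t := by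
  calc ∫⁻ t, g (t / lam) = ∫⁻ t, g (lam⁻¹ * t) := by simp_rw [div_eq_inv_mul]
    _ = ∫⁻ t, g t ∂(Measure.map (lam⁻¹ * ·) volume) :=
      (lintegral_map_equiv g (MeasurableEquiv.mulLeft₀ lam⁻¹ (inv_ne_zero hlam))).symm
    _ = ENNReal.ofReal |lam| * ∫⁻ t, g t := by
      rw [Real.map_volume_mul_left (inv_ne_zero hlam), inv_inv, lintegral_smul_measure,
        smul_eq_mul]

/-- The dilation `v ↦ c • v(· / λ)` of `L¹(ℝ)`. -/
def dilateL1 (hlam : lam ≠ 0) (c : ℝ) (v : Lp ℝ 1 (volume : Measure ℝ)) :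
    Lp ℝ 1 (volume : Measure ℝ) :=
  (((L1.integrable_coeFn v).comp_div hlam).const_mul c).toL1 _

lemma coeFn_dilateL1 (hlam : lam ≠ 0) (c : ℝ) (v : Lp ℝ 1 (volume : Measure ℝ)) :
    dilateL1 hlam c v =ᵐ[volume] fun t => c * v (t / lam) :=
  Integrable.coeFn_toL1 _

lemma lipschitzWith_dilateL1 (hlam : lam ≠ 0) (c : ℝ) :
    LipschitzWith (‖c‖₊ * ‖lam‖₊) (dilateL1 hlam c) := by
  refine LipschitzWith.of_dist_le_mul fun v v' => le_of_eq ?_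
  calc dist (dilateL1 hlam c v) (dilateL1 hlam c v')
      = ∫ t, dist (c * v (t / lam)) (c * v' (t / lam)) := by
        rw [L1.dist_eq_integral_dist]
        refine integral_congr_ae ?_
        filter_upwards [coeFn_dilateL1 hlam c v, coeFn_dilateL1 hlam c v'] with t h h'
        rw [h, h']
    _ = |c| * (|lam| * ∫ s, dist (v s) (v' s)) := by
        have hdist : ∀ a b : ℝ, dist (c * a) (c * b) = |c| * dist a b := fun a b => by
          rw [Real.dist_eq, Real.dist_eq, ← mul_sub, abs_mul]
        simp_rw [hdist]
        rw [integral_const_mul, Measure.integral_comp_div (fun s => dist (v s) (v' s)),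
          smul_eq_mul]
    _ = _ := by
      rw [L1.dist_eq_integral_dist, ← mul_assoc]
      push_cast
      simp only [Real.norm_eq_abs]

end Dilation

section Phi

variable {lam : ℝ} (H : ℝ)

lemma coe_phi (hlam : 0 < lam) (w : WW) :
    (phi lam H w).1 = dilateL1 hlam.ne' (lam ^ (H - 1)) w.1 := by
  have hvanish : ∀ᵐ t ∂(volume : Measure ℝ),
      t < 0 → lam ^ (H - 1) * (w.1 : ℝ → ℝ) (t / lam) = 0 := by
    filter_upwards [(quasiMeasurePreserving_div_const hlam.ne').ae w.2] with t ht htneg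
    rw [ht (div_neg_of_neg_of_pos htneg hlam), mul_zero]
  unfold phi
  rw [dif_pos ⟨memLp_one_iff_integrable.2
    (((L1.integrable_coeFn w.1).comp_div hlam.ne').const_mul _), hvanish⟩]
  rfl

lemma coeFn_phi (hlam : 0 < lam) (w : WW) :
    (phi lam H w).1 =ᵐ[volume] fun t => lam ^ (H - 1) * (w.1 : ℝ → ℝ) (t / lam) := by
  rw [coe_phi H hlam]
  exact coeFn_dilateL1 _ _ _

lemma measurable_phi (hlam : 0 < lam) : Measurable (phi lam H) := by
  have hval : (fun w => (phi lam H w).1) = dilateL1 hlam.ne' (lam ^ (H - 1)) ∘ Subtype.val :=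
    funext (coe_phi H hlam)
  have hmeas : Measurable fun w => (phi lam H w).1 := by
    rw [hval]
    exact (lipschitzWith_dilateL1 _ _).continuous.measurable.comp measurable_subtype_coe
  exact hmeas.subtype_mk

lemma phi_phi_inv (hlam : 0 < lam) (w : WW) : phi lam H (phi lam⁻¹ H w) = w := by
  refine Subtype.ext (Lp.ext ?_)
  filter_upwards [coeFn_phi H hlam _,
    (quasiMeasurePreserving_div_const hlam.ne').ae (coeFn_phi H (inv_pos.2 hlam) w)]
    with t h h'
  have hpow : lam ^ (H - 1) * lam⁻¹ ^ (H - 1) = 1 := by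
    rw [Real.inv_rpow hlam.le, mul_inv_cancel₀ (by positivity)]
  rw [h, h', ← mul_assoc, hpow, one_mul, div_inv_eq_mul, div_mul_cancel₀ _ hlam.ne']

def phiEquiv (hlam : 0 < lam) : WW ≃ᵐ WW where
  toFun := phi lam H
  invFun := phi lam⁻¹ H
  left_inv w := by simpa only [inv_inv] using phi_phi_inv H (inv_pos.2 hlam) w
  right_inv := phi_phi_inv H hlam
  measurable_toFun := measurable_phi H hlam
  measurable_invFun := measurable_phi H (inv_pos.2 hlam)

lemma coe_phiEquiv (hlam : 0 < lam) : ⇑(phiEquiv H hlam) = phi lam H := rfl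

lemma ScalingMeasure.map_phi {ν : Measure WW} {γ : ℝ} (hν : ScalingMeasure ν γ H)
    (hlam : 0 < lam) : ν.map (phi lam H) = ENNReal.ofReal (lam ^ (1 + γ)) • ν := by
  ext A hA
  have hpre : phi lam H ⁻¹' A = phi lam⁻¹ H '' A :=
    ((phiEquiv H hlam).symm.image_eq_preimage_symm A).symm
  have hpow : lam ^ (1 + γ) * lam⁻¹ ^ (1 + γ) = 1 := by
    rw [Real.inv_rpow hlam.le, mul_inv_cancel₀ (by positivity)]
  rw [Measure.map_apply (measurable_phi H hlam) hA, hpre, Measure.smul_apply, smul_eq_mul,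
    ← hν lam⁻¹ (inv_pos.2 hlam) A hA, ← mul_assoc, ← ENNReal.ofReal_mul (by positivity),
    hpow, ENNReal.ofReal_one, one_mul]

end Phi

def secondMoment (a : ℝ) (w : WW) : ℝ≥0∞ :=
  ∫⁻ u : ℝ, ENNReal.ofReal ((∫ t in (0:ℝ)..a, (w.1 : ℝ → ℝ) (t - u)) ^ 2)

lemma intervalIntegral_phi_comp_sub {lam : ℝ} (H : ℝ) (hlam : 0 < lam) (w : WW)
    (a u : ℝ) :
    ∫ t in (0:ℝ)..a, ((phi lam H w).1 : ℝ → ℝ) (t - u)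
      = lam ^ H * ∫ s in (0:ℝ)..a / lam, (w.1 : ℝ → ℝ) (s - u / lam) := by
  have hae : ∀ᵐ t ∂(volume : Measure ℝ),
      ((phi lam H w).1 : ℝ → ℝ) (t - u) =
        lam ^ (H - 1) * (w.1 : ℝ → ℝ) ((t - u) / lam) :=
    (measurePreserving_sub_right volume u).quasiMeasurePreserving.ae (coeFn_phi H hlam w)
  calc ∫ t in (0:ℝ)..a, ((phi lam H w).1 : ℝ → ℝ) (t - u)
      = ∫ t in (0:ℝ)..a, lam ^ (H - 1) * (w.1 : ℝ → ℝ) (t / lam - u / lam) := by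
        refine intervalIntegral.integral_congr_ae ?_
        filter_upwards [hae] with t ht _
        rw [ht, sub_div]
    _ = lam ^ (H - 1) *
          (lam * ∫ s in (0:ℝ) / lam..a / lam, (w.1 : ℝ → ℝ) (s - u / lam)) := by
        rw [intervalIntegral.integral_const_mul,
          intervalIntegral.integral_comp_div (fun s => (w.1 : ℝ → ℝ) (s - u / lam)) hlam.ne',
          smul_eq_mul]
    _ = _ := by
      rw [zero_div, ← mul_assoc, ← Real.rpow_add_one hlam.ne', sub_add_cancel]

lemma secondMoment_phi {lam : ℝ} (H : ℝ) (hlam : 0 < lam) (w : WW) (a : ℝ) :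
    secondMoment a (phi lam H w) =
      ENNReal.ofReal (lam ^ (2 * H + 1)) * secondMoment (a / lam) w := by
  calc secondMoment a (phi lam H w)
      = ∫⁻ u, ENNReal.ofReal ((lam ^ H) ^ 2) * (fun v => ENNReal.ofReal
          ((∫ s in (0:ℝ)..a / lam, (w.1 : ℝ → ℝ) (s - v)) ^ 2)) (u / lam) := by
        simp only [secondMoment, intervalIntegral_phi_comp_sub H hlam, mul_pow,
          ENNReal.ofReal_mul (sq_nonneg _)]
    _ = ENNReal.ofReal ((lam ^ H) ^ 2) * (ENNReal.ofReal lam * secondMoment (a / lam) w) := by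
        rw [lintegral_const_mul' _ _ ENNReal.ofReal_ne_top, lintegral_comp_div (fun v =>
          ENNReal.ofReal ((∫ s in (0:ℝ)..a / lam, (w.1 : ℝ → ℝ) (s - v)) ^ 2)) hlam.ne',
          abs_of_pos hlam]
        rfl
    _ = _ := by
      rw [← mul_assoc, ← ENNReal.ofReal_mul (by positivity), ← Real.rpow_natCast,
        ← Real.rpow_mul hlam.le, ← Real.rpow_add_one hlam.ne']
      norm_num [mul_comm]

end

theorem stmt_13_general (γ H : ℝ)
    (ν : Measure WW) (hscal : ScalingMeasure ν γ H)
    (x : ℝ) (hx : 0 < x) :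
    ∫⁻ w, (∫⁻ u : ℝ,
        ENNReal.ofReal ((∫ t in (0:ℝ)..x, (w.1 : ℝ → ℝ) (t - u)) ^ 2)) ∂ν =
      ENNReal.ofReal (x ^ (2 * H - γ)) *
        ∫⁻ w, (∫⁻ u : ℝ,
          ENNReal.ofReal ((∫ t in (0:ℝ)..1, (w.1 : ℝ → ℝ) (t - u)) ^ 2)) ∂ν := by
  change ∫⁻ w, secondMoment x w ∂ν =
    ENNReal.ofReal (x ^ (2 * H - γ)) * ∫⁻ w, secondMoment 1 w ∂ν
  have hscaled : ENNReal.ofReal (x ^ (1 + γ)) * ∫⁻ w, secondMoment x w ∂ν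
      = ENNReal.ofReal (x ^ (2 * H + 1)) * ∫⁻ w, secondMoment 1 w ∂ν := by
    rw [← smul_eq_mul, ← lintegral_smul_measure, ← hscal.map_phi H hx, ← coe_phiEquiv H hx,
      lintegral_map_equiv, ← lintegral_const_mul' _ _ ENNReal.ofReal_ne_top]
    simp only [coe_phiEquiv, secondMoment_phi H hx, div_self hx.ne']
  have hsplit : x ^ (2 * H + 1) = x ^ (1 + γ) * x ^ (2 * H - γ) := by
    rw [← Real.rpow_add hx]; ring_nf
  rw [hsplit, ENNReal.ofReal_mul (by positivity), mul_assoc] at hscaled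
  have hne : ENNReal.ofReal (x ^ (1 + γ)) ≠ 0 := by simp [Real.rpow_pos_of_pos hx]
  exact (ENNReal.mul_right_inj hne ENNReal.ofReal_ne_top).1 hscaled

/-- scaling of the second moment integral. If `ν` is a `(γ,H)`-scaling
σ-finite measure on `𝕎` with `γ > 0`, then for every `x > 0`, in `[0,∞]`:
`∫_{ℝ×𝕎} (∫_0^x w(t-u) dt)² du ν(dw) = x^{2H-γ} ∫_{ℝ×𝕎} (∫_0^1 w(t-u) dt)² du ν(dw)`. -/
theorem stmt_13 (γ H : ℝ) (hγ : 0 < γ)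
    (ν : Measure WW) [SigmaFinite ν] (hscal : ScalingMeasure ν γ H)
    (x : ℝ) (hx : 0 < x) :
    ∫⁻ w, (∫⁻ u : ℝ,
        ENNReal.ofReal ((∫ t in (0:ℝ)..x, (w.1 : ℝ → ℝ) (t - u)) ^ 2)) ∂ν =
      ENNReal.ofReal (x ^ (2 * H - γ)) *
        ∫⁻ w, (∫⁻ u : ℝ,
          ENNReal.ofReal ((∫ t in (0:ℝ)..1, (w.1 : ℝ → ℝ) (t - u)) ^ 2)) ∂ν :=
  stmt_13_general γ H ν hscal x hx
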